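/- Hardy type inequalities on the half-plane (Lemma A.1): Let f : 𝕋 × ℝ⁺ → ℝ be a function for which the quantities below are finite. (i) If λ > −1/2 and lim_{y→+∞} f(x,y) = 0 for each x, then ‖f⟨y⟩^λ‖_{L²(𝕋×ℝ⁺)} ≤ (2/(2λ+1))‖∂_y f ⟨y⟩^{λ+1}‖_{L²(𝕋×ℝ⁺)}. (ii) If λ < −1/2, then ‖f⟨y⟩^λ‖_{L²(𝕋×ℝ⁺)} ≤ √(−1/(2λ+1)) ‖f|_{y=0}‖_{L²(𝕋)} − (2/(2λ+1))‖∂_y f ⟨y⟩^{λ+1}‖_{L²(𝕋×ℝ⁺)}. -/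

import Mathlib

open MeasureTheory Real Set Filter
open scoped ENNReal NNReal Topology

noncomputable section

/-- Partial derivative in the tangential variable `x`. -/
def pdx (f : ℝ → ℝ → ℝ) : ℝ → ℝ → ℝ := fun x y => deriv (fun x' => f x' y) x

/-- Partial derivative in the normal variable `y`. -/
def pdy (f : ℝ → ℝ → ℝ) : ℝ → ℝ → ℝ := fun x y => deriv (fun y' => f x y') y

/-- Mixed partial derivative `∂ₓ^a ∂_y^b`. -/
def pd (a b : ℕ) (f : ℝ → ℝ → ℝ) : ℝ → ℝ → ℝ := pdx^[a] (pdy^[b] f)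

/-- Time derivative of a time-dependent field. -/
def pdt (f : ℝ → ℝ → ℝ → ℝ) : ℝ → ℝ → ℝ → ℝ := fun t x y => deriv (fun s => f s x y) t

/-- The weight `⟨y⟩ = 1 + y`. -/
def wt (y : ℝ) : ℝ := 1 + y

/-- The measure on the strip `𝕋 × ℝ⁺`, with `𝕋` realized as `[0,1)`. -/
def strip : Measure (ℝ × ℝ) :=
  (volume.restrict (Ioo (0:ℝ) 1)).prod (volume.restrict (Ioi (0:ℝ)))

/-- Squared weighted `L²(𝕋 × ℝ⁺)` norm `‖f ⟨y⟩^λ‖²`. -/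
def sqL2 (lam : ℝ) (f : ℝ → ℝ → ℝ) : ℝ≥0∞ :=
  eLpNorm (fun p : ℝ × ℝ => f p.1 p.2 * wt p.2 ^ lam) 2 strip ^ 2

/-- Squared weighted `L^∞(𝕋 × ℝ⁺)` norm. -/
def sqLinf (lam : ℝ) (f : ℝ → ℝ → ℝ) : ℝ≥0∞ :=
  eLpNorm (fun p : ℝ × ℝ => f p.1 p.2 * wt p.2 ^ lam) ⊤ strip ^ 2

/-- Squared weighted `L²(ℝ⁺)` norm in the normal variable. -/
def sqL2y (lam : ℝ) (f : ℝ → ℝ) : ℝ≥0∞ :=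
  eLpNorm (fun y => f y * wt y ^ lam) 2 (volume.restrict (Ioi (0:ℝ))) ^ 2

/-- Squared `L^∞(ℝ⁺)` norm in the normal variable. -/
def sqLinfy (f : ℝ → ℝ) : ℝ≥0∞ :=
  eLpNorm f ⊤ (volume.restrict (Ioi (0:ℝ))) ^ 2

/-- Multi-indices `α = (α₁, α₂)` with `|α| ≤ s` and `α₁ ≤ cap`. -/
def idxLe (s cap : ℕ) : Finset (ℕ × ℕ) :=
  (Finset.range (s+1) ×ˢ Finset.range (s+1)).filter fun p => p.1 + p.2 ≤ s ∧ p.1 ≤ cap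

/-- Multi-indices `α = (α₁, α₂)` with `|α| ≤ s`. -/
def idxAll (s : ℕ) : Finset (ℕ × ℕ) :=
  (Finset.range (s+1) ×ˢ Finset.range (s+1)).filter fun p => p.1 + p.2 ≤ s

/-- Squared unweighted `H^s(𝕋 × ℝ⁺)` norm. -/
def sqH (s : ℕ) (f : ℝ → ℝ → ℝ) : ℝ≥0∞ := ∑ p ∈ idxAll s, sqL2 0 (pd p.1 p.2 f)

/-- Squared weighted `H^s_{y,λ}` norm at fixed `x`. -/
def sqHy (s : ℕ) (lam : ℝ) (f : ℝ → ℝ → ℝ) (x : ℝ) : ℝ≥0∞ :=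
  ∑ p ∈ idxAll s, sqL2y lam (fun y => pd p.1 p.2 f x y)

/-- Infinitely differentiable function of one variable. -/
def Smooth1 (f : ℝ → ℝ) : Prop := ∀ n : ℕ, ContDiff ℝ n f

/-- Infinitely differentiable function of two variables. -/
def Smooth2 (f : ℝ → ℝ → ℝ) : Prop := ∀ n : ℕ, ContDiff ℝ n (fun p : ℝ × ℝ => f p.1 p.2)

/-- Infinitely differentiable function of three variables. -/
def Smooth3 (f : ℝ → ℝ → ℝ → ℝ) : Prop :=
  ∀ n : ℕ, ContDiff ℝ n (fun p : ℝ × ℝ × ℝ => f p.1 p.2.1 p.2.2)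

/-- The good unknown `w_g = ∂ₓ⁶w − (∂_y w / w) ∂ₓ⁶u`, where `w = ∂_y u`. -/
def goodW (u : ℝ → ℝ → ℝ) : ℝ → ℝ → ℝ := fun x y =>
  pd 6 1 u x y - pd 0 2 u x y / pd 0 1 u x y * pd 6 0 u x y

/-- The good unknown `ϱ_g = ∂ₓ⁶ϱ − (∂_y ϱ / w) ∂ₓ⁶u`, where `w = ∂_y u`. -/
def goodR (vr u : ℝ → ℝ → ℝ) : ℝ → ℝ → ℝ := fun x y =>
  pd 6 0 vr x y - pd 0 1 vr x y / pd 0 1 u x y * pd 6 0 u x y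

/-- Energy norm `E` for the unsteady problem, where `vr = ρ − ϱ∞` and `w = ∂_y u`. -/
def energyU (γ σ : ℝ) (vr u : ℝ → ℝ → ℝ) : ℝ≥0∞ :=
  (∑ p ∈ idxLe 6 5, sqL2 (γ + (p.2 : ℝ)) (pd p.1 p.2 (pd 0 1 u)))
  + (∑ p ∈ idxLe 6 5, sqL2 (σ + (p.2 : ℝ)) (pd p.1 p.2 vr))
  + sqL2 γ (goodR vr u) + sqL2 γ (goodW u)
  + (∑ p ∈ idxLe 2 2, sqLinf (σ + (p.2 : ℝ)) (pd p.1 p.2 (pd 0 1 u)))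

/-- Dissipation norm `D` for the unsteady problem. -/
def dissU (γ : ℝ) (u : ℝ → ℝ → ℝ) : ℝ≥0∞ :=
  (∑ p ∈ idxLe 6 5, sqL2 (γ + (p.2 : ℝ)) (pd 0 1 (pd p.1 p.2 (pd 0 1 u))))
  + sqL2 γ (pd 0 1 (goodW u))

/-- The auxiliary energy `E₂` of Lemma 3.1. -/
def energyU2 (γ σ : ℝ) (vr u : ℝ → ℝ → ℝ) : ℝ≥0∞ :=
  (∑ p ∈ idxLe 6 6, sqL2 (γ + (p.2 : ℝ)) (pd p.1 p.2 (pd 0 1 u)))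
  + (∑ p ∈ idxLe 6 5, sqL2 (σ + (p.2 : ℝ)) (pd p.1 p.2 vr))
  + sqL2 γ (pd 6 0 vr)
  + (∑ p ∈ idxLe 2 2, sqLinf (σ + (p.2 : ℝ)) (pd p.1 p.2 (pd 0 1 u)))

/-- The function `I = Σ_{|α| ≤ 2} |∂^α w ⟨y⟩^{σ+α₂}|²`, with `w = ∂_y u`. -/
def Ifun (σ : ℝ) (u : ℝ → ℝ → ℝ) : ℝ → ℝ → ℝ := fun x y =>
  ∑ p ∈ idxLe 2 2, (pd p.1 p.2 (pd 0 1 u) x y * wt y ^ (σ + (p.2 : ℝ))) ^ 2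

/-- `‖I‖_{L^∞(𝕋 × ℝ⁺)}`. -/
def linfI (σ : ℝ) (u : ℝ → ℝ → ℝ) : ℝ≥0∞ :=
  eLpNorm (fun q : ℝ × ℝ => Ifun σ u q.1 q.2) ⊤ strip

/-- Infimum over the strip `𝕋 × ℝ⁺`. -/
def infStrip (f : ℝ → ℝ → ℝ) : ℝ := ⨅ p : ℝ × {y : ℝ // 0 < y}, f p.1 p.2.1

/-- A classical solution of the inhomogeneous unsteady Prandtl system on
`[0,T] × 𝕋 × ℝ⁺` with constant outer Euler flow `(ϱ∞, u∞)` and initial data `(ρ₀, u₀)`. -/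
structure IsPrandtlSol (T ϱinf uinf : ℝ) (ρ u v : ℝ → ℝ → ℝ → ℝ)
    (ρ₀ u₀ : ℝ → ℝ → ℝ) : Prop where
  periodic : ∀ t x y : ℝ, ρ t (x+1) y = ρ t x y ∧ u t (x+1) y = u t x y ∧ v t (x+1) y = v t x y
  mass : ∀ t ∈ Icc (0:ℝ) T, ∀ x : ℝ, ∀ y > (0:ℝ),
    pdt ρ t x y + u t x y * pdx (ρ t) x y + v t x y * pdy (ρ t) x y = 0
  momentum : ∀ t ∈ Icc (0:ℝ) T, ∀ x : ℝ, ∀ y > (0:ℝ),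
    ρ t x y * pdt u t x y + ρ t x y * u t x y * pdx (u t) x y
      + ρ t x y * v t x y * pdy (u t) x y - pd 0 2 (u t) x y = 0
  divfree : ∀ t ∈ Icc (0:ℝ) T, ∀ x : ℝ, ∀ y > (0:ℝ), pdx (u t) x y + pdy (v t) x y = 0
  noslip : ∀ t ∈ Icc (0:ℝ) T, ∀ x : ℝ, u t x 0 = 0 ∧ v t x 0 = 0
  farfield : ∀ t ∈ Icc (0:ℝ) T, ∀ x : ℝ,
    Tendsto (fun y => ρ t x y) atTop (𝓝 ϱinf) ∧ Tendsto (fun y => u t x y) atTop (𝓝 uinf)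
  init : ∀ x y : ℝ, ρ 0 x y = ρ₀ x y ∧ u 0 x y = u₀ x y

/-- A smooth solution of the regularized inhomogeneous Prandtl system on
`[0,T] × 𝕋 × ℝ⁺`, where `vr = ϱ^ε = ρ^ε − ϱ∞`. -/
structure IsRegSol (ε T ϱinf uinf : ℝ) (vr u v : ℝ → ℝ → ℝ → ℝ) : Prop where
  smooth_vr : Smooth3 vr
  smooth_u : Smooth3 u
  smooth_v : Smooth3 v
  periodic : ∀ t x y : ℝ,
    vr t (x+1) y = vr t x y ∧ u t (x+1) y = u t x y ∧ v t (x+1) y = v t x y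
  mass : ∀ t ∈ Icc (0:ℝ) T, ∀ x : ℝ, ∀ y > (0:ℝ),
    pdt vr t x y + u t x y * pdx (vr t) x y + v t x y * pdy (vr t) x y
      - ε * pd 2 0 (vr t) x y = 0
  momentum : ∀ t ∈ Icc (0:ℝ) T, ∀ x : ℝ, ∀ y > (0:ℝ),
    pdt u t x y + u t x y * pdx (u t) x y + v t x y * pdy (u t) x y
      - ε * pd 2 0 (u t) x y - (vr t x y + ϱinf)⁻¹ * pd 0 2 (u t) x y = 0
  divfree : ∀ t ∈ Icc (0:ℝ) T, ∀ x : ℝ, ∀ y > (0:ℝ), pdx (u t) x y + pdy (v t) x y = 0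
  noslip : ∀ t ∈ Icc (0:ℝ) T, ∀ x : ℝ, u t x 0 = 0 ∧ v t x 0 = 0
  vort_bc : ∀ t ∈ Icc (0:ℝ) T, ∀ x : ℝ, pd 0 2 (u t) x 0 = 0
  farfield : ∀ t ∈ Icc (0:ℝ) T, ∀ x : ℝ,
    Tendsto (fun y => vr t x y) atTop (𝓝 0) ∧ Tendsto (fun y => u t x y) atTop (𝓝 uinf)

/-- The lower-bound condition (L): `w^ε ⟨y⟩^σ ≥ δ` and `κ ≤ ϱ^ε + ϱ∞ ≤ κ̄`. -/
def LowerBound (σ δ κ κb T ϱinf : ℝ) (vr u : ℝ → ℝ → ℝ → ℝ) : Prop :=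
  ∀ t ∈ Icc (0:ℝ) T, ∀ x : ℝ, ∀ y > (0:ℝ),
    δ ≤ pd 0 1 (u t) x y * wt y ^ σ ∧ κ ≤ vr t x y + ϱinf ∧ vr t x y + ϱinf ≤ κb

/-- Dissipation norm `D₁` for the regularized problem. -/
def dissReg (ε γ σ ϱinf : ℝ) (vr u : ℝ → ℝ → ℝ) : ℝ≥0∞ :=
  (∑ p ∈ idxLe 6 5, ENNReal.ofReal ε * sqL2 (γ + (p.2 : ℝ)) (pd 1 0 (pd p.1 p.2 (pd 0 1 u))))
  + (∑ p ∈ idxLe 6 5, sqL2 (γ + (p.2 : ℝ))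
      (fun x y => (Real.sqrt (vr x y + ϱinf))⁻¹ * pd 0 1 (pd p.1 p.2 (pd 0 1 u)) x y))
  + (∑ p ∈ idxLe 6 5, ENNReal.ofReal ε * sqL2 (σ + (p.2 : ℝ)) (pd 1 0 (pd p.1 p.2 vr)))
  + ENNReal.ofReal ε * sqL2 γ (pd 1 0 (goodW u))
  + sqL2 γ (fun x y => (Real.sqrt (vr x y + ϱinf))⁻¹ * pd 0 1 (goodW u) x y)
  + ENNReal.ofReal ε * sqL2 γ (pd 1 0 (goodR vr u))

/-- A classical solution of the steady inhomogeneous Prandtl system on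
`[0,L] × ℝ⁺` with constant outer Euler flow `(ϱ∞, u∞)`. -/
structure IsSteadySol (L ϱinf uinf : ℝ) (ρ u v : ℝ → ℝ → ℝ) : Prop where
  mass : ∀ x ∈ Icc (0:ℝ) L, ∀ y > (0:ℝ),
    u x y * pdx ρ x y + v x y * pdy ρ x y = 0
  momentum : ∀ x ∈ Icc (0:ℝ) L, ∀ y > (0:ℝ),
    ρ x y * u x y * pdx u x y + ρ x y * v x y * pdy u x y - pd 0 2 u x y = 0
  divfree : ∀ x ∈ Icc (0:ℝ) L, ∀ y > (0:ℝ), pdx u x y + pdy v x y = 0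
  noslip : ∀ x ∈ Icc (0:ℝ) L, u x 0 = 0 ∧ v x 0 = 0
  farfield : ∀ x ∈ Icc (0:ℝ) L,
    Tendsto (fun y => ρ x y) atTop (𝓝 ϱinf) ∧ Tendsto (fun y => u x y) atTop (𝓝 uinf)

/-- The quotient `v/u`. -/
def qdiv (u v : ℝ → ℝ → ℝ) : ℝ → ℝ → ℝ := fun x y => v x y / u x y

/-- Steady energy norm `X(x)`. -/
def energyS (m : ℕ) (σ ϱinf uinf : ℝ) (ρ u v : ℝ → ℝ → ℝ) (x : ℝ) : ℝ≥0∞ :=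
  (∑ p ∈ idxAll m, sqL2y 0 (fun y => pd p.1 p.2 (fun a b => ρ a b - ϱinf) x y))
  + (∑ p ∈ idxAll m,
      sqL2y σ (fun y => Real.sqrt (ρ x y) * u x y * pd p.1 (p.2+1) (qdiv u v) x y))
  + sqL2y 0 (fun y => u x y - uinf)
  + sqL2y 0 (fun y => pd 0 1 u x y)

/-- Steady dissipation norm `Y(x)`. -/
def dissS (m : ℕ) (σ : ℝ) (u v : ℝ → ℝ → ℝ) (x : ℝ) : ℝ≥0∞ :=
  ∑ p ∈ idxAll m, sqL2y σ (fun y => Real.sqrt (u x y) * pd p.1 (p.2+2) (qdiv u v) x y)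

/-- Fast decay of a function on `ℝ⁺` together with all its derivatives. -/
def FastDecay (f : ℝ → ℝ) : Prop :=
  ∀ k n : ℕ, Tendsto (fun y => y ^ n * iteratedDeriv k f y) atTop (𝓝 0)

/-- The initial vertical velocity `v|_{x=0} = −u₀(y) ∫₀^y ∂_{y'}² u₀ / (ρ₀ u₀²) dy'`. -/
def initialV (ρ₀ u₀ : ℝ → ℝ) : ℝ → ℝ := fun y =>
  -(u₀ y * ∫ s in Ioc (0:ℝ) y, iteratedDeriv 2 u₀ s / (ρ₀ s * (u₀ s) ^ 2))

/-- Generic compatibility conditions at the corner `(0,0)` up to order `m`: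
`∂ₓ^{k-1} ∂_y³ v |_{x=0,y=0} = 0` for `1 ≤ k ≤ m`, where `v|_{x=0}` is determined
by the initial data. -/
def GenericCompat (m : ℕ) (ϱinf uinf : ℝ) (ρ₀ u₀ : ℝ → ℝ) : Prop :=
  ∀ (L : ℝ) (ρ u v : ℝ → ℝ → ℝ), 0 < L →
    Smooth2 ρ → Smooth2 u → Smooth2 v →
    IsSteadySol L ϱinf uinf ρ u v →
    (∀ y : ℝ, ρ 0 y = ρ₀ y) → (∀ y : ℝ, u 0 y = u₀ y) →
    (∀ y : ℝ, v 0 y = initialV ρ₀ u₀ y) →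
    ∀ k : ℕ, 1 ≤ k → k ≤ m → pd (k - 1) 3 v 0 0 = 0

/-- The iteration scheme for the steady problem. -/
structure IsIterSol (L θ ϱinf uinf : ℝ) (ρ₀ u₀ q₀ : ℝ → ℝ)
    (R U Q : ℕ → ℝ → ℝ → ℝ) : Prop where
  smooth : ∀ k : ℕ, Smooth2 (R k) ∧ Smooth2 (U k) ∧ Smooth2 (Q k)
  base : ∀ x y : ℝ, R 0 x y = ρ₀ y ∧ U 0 x y = u₀ y ∧ Q 0 x y = q₀ y
  mass : ∀ k : ℕ, 1 ≤ k → ∀ x ∈ Icc (0:ℝ) L, ∀ y > (0:ℝ),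
    pdx (R k) x y + Q (k-1) x y * pdy (R k) x y = 0
  momentum : ∀ k : ℕ, 1 ≤ k → ∀ x ∈ Icc (0:ℝ) L, ∀ y > (0:ℝ),
    pdx (fun a b => R k a b * (U (k-1) a b + θ) ^ 2 * pdy (Q k) a b) x y
      - pd 0 3 (fun a b => U (k-1) a b * Q k a b) x y = 0
  divfree : ∀ k : ℕ, 1 ≤ k → ∀ x ∈ Icc (0:ℝ) L, ∀ y > (0:ℝ),
    pdx (U k) x y + pdy (fun a b => U (k-1) a b * Q k a b) x y = 0
  noslip : ∀ k : ℕ, 1 ≤ k → ∀ x ∈ Icc (0:ℝ) L, Q k x 0 = 0 ∧ U k x 0 = 0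
  farfield : ∀ k : ℕ, 1 ≤ k → ∀ x ∈ Icc (0:ℝ) L,
    Tendsto (fun y => R k x y) atTop (𝓝 ϱinf) ∧ Tendsto (fun y => U k x y) atTop (𝓝 uinf)
      ∧ Tendsto (fun y => pdy (Q k) x y) atTop (𝓝 0)
  init : ∀ k : ℕ, 1 ≤ k → ∀ y : ℝ, R k 0 y = ρ₀ y ∧ U k 0 y = u₀ y ∧ Q k 0 y = q₀ y

/-- Energy norm `X^k(x)` for the iteration scheme. -/
def energyIter (m : ℕ) (σ θ ϱinf uinf : ℝ) (R U Q : ℕ → ℝ → ℝ → ℝ)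
    (k : ℕ) (x : ℝ) : ℝ≥0∞ :=
  (∑ p ∈ idxAll m, sqL2y 0 (fun y => pd p.1 p.2 (fun a b => R k a b - ϱinf) x y))
  + (∑ p ∈ idxAll m, sqL2y σ
      (fun y => Real.sqrt (R k x y) * (U (k-1) x y + θ) * pd p.1 (p.2+1) (Q k) x y))
  + sqL2y 0 (fun y => U k x y - uinf)
  + sqL2y 0 (fun y => pd 0 1 (U k) x y)

/-- Dissipation norm `Y^k(x)` for the iteration scheme. -/
def dissIter (m : ℕ) (σ : ℝ) (U Q : ℕ → ℝ → ℝ → ℝ) (k : ℕ) (x : ℝ) : ℝ≥0∞ :=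
  ∑ p ∈ idxAll m, sqL2y σ (fun y => Real.sqrt (U (k-1) x y) * pd p.1 (p.2+2) (Q k) x y)

/-- Difference quotient `q̃ = (v₁ − v₂)/u₂` for the steady stability estimate. -/
def qtil (u₂ v₁ v₂ : ℝ → ℝ → ℝ) : ℝ → ℝ → ℝ := fun x y => (v₁ x y - v₂ x y) / u₂ x y

/-- `Φ(x) = ‖(√ρ₁ u₂ ∂_y q̃ ⟨y⟩^σ, ρ̃)(x,·)‖²_{L²_y}`. -/
def stabPhi (σ : ℝ) (ρ₁ ρ₂ u₂ v₁ v₂ : ℝ → ℝ → ℝ) (x : ℝ) : ℝ :=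
  (sqL2y σ (fun y => Real.sqrt (ρ₁ x y) * u₂ x y * pd 0 1 (qtil u₂ v₁ v₂) x y)
    + sqL2y 0 (fun y => ρ₁ x y - ρ₂ x y)).toReal

/-- `Ψ(x) = ‖(√u₂ ∂_y² q̃ ⟨y⟩^σ)(x,·)‖²_{L²_y}`. -/
def stabPsi (σ : ℝ) (u₂ v₁ v₂ : ℝ → ℝ → ℝ) (x : ℝ) : ℝ :=
  (sqL2y σ (fun y => Real.sqrt (u₂ x y) * pd 0 2 (qtil u₂ v₁ v₂) x y)).toReal

/-!
Write `μ = 2λ + 1`, and on a fibre `x = const` put `u = f ⟨y⟩^λ` and `v = ∂_y f ⟨y⟩^(λ+1)`. Then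
`∂_y (f² ⟨y⟩^μ) = 2uv + μu²`, so integrating over `[0, R]` and using `2|uv| ≤ εu² + ε⁻¹v²` gives
`|μ ∫₀^R u² - (f(R)² ⟨R⟩^μ - f(0)²)| ≤ ε ∫₀^R u² + ε⁻¹ ∫₀^R v²`.

For `μ > 0` the boundary term at `R` tends to zero: Cauchy–Schwarz (obtained by optimising the same
AM–GM bound in `ε`) gives `f(R)² ≤ (∫_R^∞ v²)(∫_R^∞ ⟨y⟩^(-μ-1))`. Taking `ε = μ/2` yields (i).
For `μ < 0` the boundary term at `R` has a favourable sign, which leaves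
`(|μ| - ε) ‖u‖² ≤ f(0)² + ε⁻¹ ‖v‖²` on each fibre; this is linear in the squared norms, so it
can be integrated in `x`, and optimising in `ε` afterwards yields (ii).
-/

lemma sq_le_four_mul_of_forall_le_mul_add_inv_mul {X P Q : ℝ} (hX : 0 ≤ X) (hP : 0 ≤ P)
    (hQ : 0 ≤ Q) (h : ∀ ε > 0, X ≤ ε * P + ε⁻¹ * Q) : X ^ 2 ≤ 4 * P * Q := by
  have hquad : ∀ t : ℝ, 0 ≤ P * (t * t) + -X * t + Q := by
    intro t
    rcases le_or_gt t 0 with ht | ht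
    · nlinarith [mul_nonneg hP (mul_self_nonneg t)]
    · have := mul_le_mul_of_nonneg_left (h t ht) ht.le
      rw [mul_add, ← mul_assoc, ← mul_assoc, mul_inv_cancel₀ ht.ne', one_mul] at this
      nlinarith
  have := discrim_le_zero hquad
  rw [discrim] at this
  nlinarith

lemma two_mul_abs_le_of_sq_le_mul {X P Q ε : ℝ} (hε : 0 < ε) (hP : 0 ≤ P) (hQ : 0 ≤ Q)
    (h : X ^ 2 ≤ P * Q) : 2 * |X| ≤ ε * P + ε⁻¹ * Q := by
  have key : (2 * |X|) ^ 2 ≤ (ε * P + ε⁻¹ * Q) ^ 2 := by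
    have hεε : ε * ε⁻¹ = 1 := mul_inv_cancel₀ hε.ne'
    nlinarith [sq_nonneg (ε * P - ε⁻¹ * Q), sq_abs X]
  exact abs_le_of_sq_le_sq' key (by positivity) |>.2

lemma le_sqrt_inv_mul_add_of_forall_sub_mul_sq_le {ν a b c : ℝ} (hν : 0 < ν) (ha : 0 ≤ a)
    (hb : 0 ≤ b) (hc : 0 ≤ c)
    (h : ∀ ε, 0 < ε → ε < ν → (ν - ε) * a ^ 2 ≤ c ^ 2 + ε⁻¹ * b ^ 2) :
    a ≤ √(1 / ν) * c + 2 / ν * b := by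
  have hfamily : ∀ ε > 0, ν * a ^ 2 - c ^ 2 ≤ ε * a ^ 2 + ε⁻¹ * b ^ 2 := by
    intro ε hε
    rcases lt_or_ge ε ν with hεν | hνε
    · linarith [h ε hε hεν]
    · nlinarith [sq_nonneg c, mul_nonneg (inv_nonneg.2 hε.le) (sq_nonneg b)]
  have hcross : ν * a ^ 2 ≤ c ^ 2 + 2 * a * b := by
    rcases le_or_gt (ν * a ^ 2 - c ^ 2) 0 with hX | hX
    · nlinarith [mul_nonneg ha hb]
    · have hsq := sq_le_four_mul_of_forall_le_mul_add_inv_mul hX.le (sq_nonneg a) (sq_nonneg b)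
        hfamily
      have : ν * a ^ 2 - c ^ 2 ≤ 2 * a * b :=
        abs_le_of_sq_le_sq' (by nlinarith) (by positivity) |>.2
      linarith
  set s := √ν with hs
  have hs0 : 0 < s := Real.sqrt_pos.2 hν
  have hss : s ^ 2 = ν := Real.sq_sqrt hν.le
  have hsa : s ^ 2 * a ≤ s * c + 2 * b := by
    by_contra! hcon
    rw [← hss] at hcross
    have hsac : c < s * a := by nlinarith
    have ha0 : 0 < a := by nlinarith
    nlinarith [mul_lt_mul_of_pos_right hcon ha0, mul_le_mul_of_nonneg_left hsac.le hc]
  rw [Real.sqrt_div' _ hν.le, Real.sqrt_one, ← hs, ← hss]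
  rw [div_mul_eq_mul_div, div_mul_eq_mul_div, one_mul, div_add_div _ _ hs0.ne' (by positivity),
    le_div_iff₀ (by positivity)]
  nlinarith

lemma ENNReal.le_sqrt_inv_mul_add_of_forall_sub_mul_sq_le {ν : ℝ} (hν : 0 < ν) {a b c : ℝ≥0∞}
    (h : ∀ ε, 0 < ε → ε < ν →
      ENNReal.ofReal (ν - ε) * a ^ 2 ≤ c ^ 2 + ENNReal.ofReal ε⁻¹ * b ^ 2) :
    a ≤ ENNReal.ofReal √(1 / ν) * c + ENNReal.ofReal (2 / ν) * b := by
  rcases eq_or_ne c ⊤ with rfl | hc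
  · simp [ENNReal.mul_top, hν]
  rcases eq_or_ne b ⊤ with rfl | hb
  · simp [ENNReal.mul_top, hν]
  have ha : a ≠ ⊤ := by
    rintro rfl
    have := h (ν / 2) (by positivity) (by linarith)
    simp [ENNReal.mul_top, hν, ENNReal.top_pow, hc, hb, ENNReal.mul_eq_top] at this
  rw [← ENNReal.ofReal_toReal ha, ← ENNReal.ofReal_toReal hb, ← ENNReal.ofReal_toReal hc] at h ⊢
  rw [← ENNReal.ofReal_mul (by positivity), ← ENNReal.ofReal_mul (by positivity),
    ← ENNReal.ofReal_add (by positivity) (by positivity)]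
  refine ENNReal.ofReal_le_ofReal (_root_.le_sqrt_inv_mul_add_of_forall_sub_mul_sq_le hν
    ENNReal.toReal_nonneg ENNReal.toReal_nonneg ENNReal.toReal_nonneg fun ε hε hεν => ?_)
  have := h ε hε hεν
  rwa [← ENNReal.ofReal_pow ENNReal.toReal_nonneg, ← ENNReal.ofReal_pow ENNReal.toReal_nonneg,
    ← ENNReal.ofReal_pow ENNReal.toReal_nonneg, ← ENNReal.ofReal_mul (by linarith),
    ← ENNReal.ofReal_mul (by positivity), ← ENNReal.ofReal_add (by positivity) (by positivity),
    ENNReal.ofReal_le_ofReal_iff (by positivity)] at this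

lemma sq_eLpNorm_two {α : Type*} [MeasurableSpace α] (μ : Measure α) (F : α → ℝ) :
    eLpNorm F 2 μ ^ 2 = ∫⁻ a, ENNReal.ofReal (F a ^ 2) ∂μ := by
  have := eLpNorm_nnreal_pow_eq_lintegral (μ := μ) (f := F) (p := 2) two_ne_zero
  simp only [NNReal.coe_ofNat, ENNReal.coe_ofNat, ENNReal.rpow_ofNat] at this
  rw [this]
  congr 1 with a
  rw [Real.enorm_eq_ofReal_abs, ← ENNReal.ofReal_pow (abs_nonneg _), sq_abs]

lemma sq_eLpNorm_two_prod {α β : Type*} [MeasurableSpace α] [MeasurableSpace β]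
    (μ : Measure α) (ν : Measure β) [SFinite ν] {F : α × β → ℝ} (hF : Measurable F) :
    eLpNorm F 2 (μ.prod ν) ^ 2 = ∫⁻ x, eLpNorm (fun y => F (x, y)) 2 ν ^ 2 ∂μ := by
  simp_rw [sq_eLpNorm_two]
  exact lintegral_prod _ (hF.pow_const 2).ennreal_ofReal.aemeasurable

lemma sq_eLpNorm_two_eq_ofReal_integral {α : Type*} [MeasurableSpace α] {μ : Measure α}
    {F : α → ℝ} (hF : Integrable (fun a => F a ^ 2) μ) :
    eLpNorm F 2 μ ^ 2 = ENNReal.ofReal (∫ a, F a ^ 2 ∂μ) := by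
  rw [sq_eLpNorm_two, ofReal_integral_eq_lintegral_ofReal hF
    (Eventually.of_forall fun _ => sq_nonneg _)]

lemma wt_pos {y : ℝ} (hy : 0 ≤ y) : 0 < wt y := by
  unfold wt; linarith

lemma hasDerivAt_wt_rpow (p : ℝ) {y : ℝ} (hy : 0 ≤ y) :
    HasDerivAt (fun z => wt z ^ p) (p * wt y ^ (p - 1)) y := by
  simpa [wt] using ((hasDerivAt_id y).const_add 1).rpow_const (p := p) (Or.inl (wt_pos hy).ne')

lemma ContinuousOn.mul_wt_rpow {φ : ℝ → ℝ} {s : Set ℝ} (hφ : ContinuousOn φ s)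
    (hs : s ⊆ Ici 0) (p : ℝ) : ContinuousOn (fun y => φ y * wt y ^ p) s :=
  hφ.mul fun _ hy => (hasDerivAt_wt_rpow p (hs hy)).continuousAt.continuousWithinAt

lemma uIcc_subset_Ici_zero {a b : ℝ} (ha : 0 ≤ a) (hb : 0 ≤ b) : uIcc a b ⊆ Ici 0 :=
  fun _ hy => le_trans (le_min ha hb) hy.1

lemma integral_wt_rpow_neg_le {p R S : ℝ} (hp : 0 < p) (hR : 0 ≤ R) (hRS : R ≤ S) :
    ∫ y in R..S, wt y ^ (-(p + 1)) ≤ p⁻¹ * wt R ^ (-p) := by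
  have h0 : (0 : ℝ) ∉ uIcc (1 + R) (1 + S) := by
    rw [uIcc_of_le (by linarith)]
    exact fun h => by linarith [h.1]
  unfold wt
  rw [intervalIntegral.integral_comp_add_left (fun x : ℝ => x ^ (-(p + 1))),
    integral_rpow (Or.inr ⟨by linarith, h0⟩), show -(p + 1) + 1 = -p by ring]
  have hS : 0 ≤ (1 + S) ^ (-p) := Real.rpow_nonneg (by linarith) _
  rw [div_neg, ← neg_div, neg_sub, div_eq_inv_mul]
  gcongr
  linarith

lemma intervalIntegral_le_setIntegral_Ioi {φ : ℝ → ℝ} (hφ : IntegrableOn φ (Ioi 0))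
    (hφ0 : ∀ y, 0 ≤ φ y) {R S : ℝ} (hR : 0 ≤ R) (hRS : R ≤ S) :
    ∫ y in R..S, φ y ≤ ∫ y in Ioi R, φ y := by
  rw [intervalIntegral.integral_of_le hRS]
  exact setIntegral_mono_set (hφ.mono_set (Ioi_subset_Ioi hR))
    (Eventually.of_forall hφ0) Ioc_subset_Ioi_self.eventuallyLE

lemma lintegral_Ioi_le_of_intervalIntegral_le {φ e : ℝ → ℝ} {K : ℝ}
    (hφ : ContinuousOn φ (Ici 0)) (hφ0 : ∀ y, 0 ≤ φ y) (he : Tendsto e atTop (𝓝 0))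
    (h : ∀ R ≥ 0, ∫ y in 0..R, φ y ≤ K + e R) :
    ∫⁻ y in Ioi 0, ENNReal.ofReal (φ y) ≤ ENNReal.ofReal K := by
  have hexhaust : Tendsto (fun R => ∫⁻ y in Ioc 0 R, ENNReal.ofReal (φ y)) atTop
      (𝓝 (∫⁻ y in Ioi 0, ENNReal.ofReal (φ y))) := by
    simp_rw [← withDensity_apply _ measurableSet_Ioc, ← withDensity_apply _ measurableSet_Ioi,
      ← iUnion_Ioc_right (0 : ℝ)]
    exact tendsto_measure_iUnion_atTop fun a b hab => Ioc_subset_Ioc_right hab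
  have hbound : Tendsto (fun R => ENNReal.ofReal (K + e R)) atTop (𝓝 (ENNReal.ofReal K)) := by
    simpa using ENNReal.tendsto_ofReal (he.const_add K)
  refine le_of_tendsto_of_tendsto hexhaust hbound ?_
  filter_upwards [eventually_ge_atTop 0] with R hR
  have hint : IntegrableOn φ (Ioc 0 R) :=
    (hφ.mono Icc_subset_Ici_self).integrableOn_Icc.mono_set Ioc_subset_Icc_self
  rw [← ofReal_integral_eq_lintegral_ofReal hint (Eventually.of_forall hφ0),
    ← intervalIntegral.integral_of_le hR]
  exact ENNReal.ofReal_le_ofReal (h R hR)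

section OneDimensional

variable {g g' : ℝ → ℝ}

lemma hasDerivAt_sq_mul_wt_rpow (hg : ∀ y, HasDerivAt g (g' y) y) (lam : ℝ) {y : ℝ}
    (hy : 0 ≤ y) :
    HasDerivAt (fun z => g z ^ 2 * wt z ^ (2 * lam + 1))
      (2 * (g y * wt y ^ lam * (g' y * wt y ^ (lam + 1))) + (2 * lam + 1) * (g y * wt y ^ lam) ^ 2)
      y := by
  have hw := wt_pos hy
  refine (((hg y).fun_pow 2).mul (hasDerivAt_wt_rpow (2 * lam + 1) hy)).congr_deriv ?_
  have h1 : wt y ^ lam * wt y ^ (lam + 1) = wt y ^ (2 * lam + 1) := by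
    rw [← Real.rpow_add hw]; ring_nf
  have h2 : (wt y ^ lam) ^ 2 = wt y ^ (2 * lam + 1 - 1) := by
    rw [← Real.rpow_natCast, ← Real.rpow_mul hw.le]; push_cast; ring_nf
  rw [mul_pow, h2, mul_mul_mul_comm, h1]
  push_cast; ring

lemma integral_energy_identity (hg : ∀ y, HasDerivAt g (g' y) y) (hg' : Continuous g')
    (lam : ℝ) {R : ℝ} (hR : 0 ≤ R) :
    ∫ y in 0..R, (2 * (g y * wt y ^ lam * (g' y * wt y ^ (lam + 1)))
        + (2 * lam + 1) * (g y * wt y ^ lam) ^ 2)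
      = g R ^ 2 * wt R ^ (2 * lam + 1) - g 0 ^ 2 := by
  have hs := uIcc_subset_Ici_zero le_rfl hR
  have hgc : Continuous g := continuous_iff_continuousAt.2 fun y => (hg y).continuousAt
  rw [intervalIntegral.integral_eq_sub_of_hasDerivAt
    (fun y hy => hasDerivAt_sq_mul_wt_rpow hg lam (hs hy))]
  · simp [wt]
  · refine ContinuousOn.intervalIntegrable ?_
    have hu := hgc.continuousOn.mul_wt_rpow hs lam
    have hv := hg'.continuousOn.mul_wt_rpow hs (lam + 1)
    exact (continuousOn_const.mul (hu.mul hv)).add (continuousOn_const.mul (hu.pow 2))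

lemma abs_energy_sub_boundary_le (hg : ∀ y, HasDerivAt g (g' y) y) (hg' : Continuous g')
    (lam : ℝ) {R ε : ℝ} (hR : 0 ≤ R) (hε : 0 < ε) :
    |(2 * lam + 1) * (∫ y in 0..R, (g y * wt y ^ lam) ^ 2)
        - (g R ^ 2 * wt R ^ (2 * lam + 1) - g 0 ^ 2)|
      ≤ ε * (∫ y in 0..R, (g y * wt y ^ lam) ^ 2)
        + ε⁻¹ * ∫ y in 0..R, (g' y * wt y ^ (lam + 1)) ^ 2 := by
  have hs := uIcc_subset_Ici_zero le_rfl hR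
  have hgc : Continuous g := continuous_iff_continuousAt.2 fun y => (hg y).continuousAt
  have hu := hgc.continuousOn.mul_wt_rpow hs lam
  have hv := hg'.continuousOn.mul_wt_rpow hs (lam + 1)
  have hcross : IntervalIntegrable (fun y => 2 * (g y * wt y ^ lam * (g' y * wt y ^ (lam + 1))))
      volume 0 R := (continuousOn_const.mul (hu.mul hv)).intervalIntegrable
  have hu2 : IntervalIntegrable (fun y => (g y * wt y ^ lam) ^ 2) volume 0 R :=
    (hu.pow 2).intervalIntegrable
  have hv2 : IntervalIntegrable (fun y => (g' y * wt y ^ (lam + 1)) ^ 2) volume 0 R :=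
    (hv.pow 2).intervalIntegrable
  have hcross_eq : (2 * lam + 1) * (∫ y in 0..R, (g y * wt y ^ lam) ^ 2)
      - (g R ^ 2 * wt R ^ (2 * lam + 1) - g 0 ^ 2)
      = -∫ y in 0..R, 2 * (g y * wt y ^ lam * (g' y * wt y ^ (lam + 1))) := by
    rw [← integral_energy_identity hg hg' lam hR, intervalIntegral.integral_add hcross
      (hu2.const_mul _), intervalIntegral.integral_const_mul (2 * lam + 1)]
    ring
  rw [hcross_eq, abs_neg, ← intervalIntegral.integral_const_mul,
    ← intervalIntegral.integral_const_mul, ← intervalIntegral.integral_add (hu2.const_mul _)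
      (hv2.const_mul _)]
  refine (intervalIntegral.abs_integral_le_integral_abs hR).trans
    (intervalIntegral.integral_mono_on hR hcross.abs ((hu2.const_mul _).add (hv2.const_mul _))
      fun y _ => ?_)
  rw [abs_mul, abs_two]
  exact two_mul_abs_le_of_sq_le_mul hε (sq_nonneg _) (sq_nonneg _) (mul_pow _ _ 2).le

lemma two_mul_abs_sub_le_of_hasDerivAt (hg : ∀ y, HasDerivAt g (g' y) y) (hg' : Continuous g')
    (lam : ℝ) {R S ε : ℝ} (hR : 0 ≤ R) (hRS : R ≤ S) (hε : 0 < ε) :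
    2 * |g S - g R| ≤ ε * (∫ y in R..S, (g' y * wt y ^ (lam + 1)) ^ 2)
      + ε⁻¹ * ∫ y in R..S, wt y ^ (-(2 * lam + 2)) := by
  have hs := uIcc_subset_Ici_zero hR (hR.trans hRS)
  have hv2 : IntervalIntegrable (fun y => (g' y * wt y ^ (lam + 1)) ^ 2) volume R S :=
    ((hg'.continuousOn.mul_wt_rpow hs (lam + 1)).pow 2).intervalIntegrable
  have hw : IntervalIntegrable (fun y => wt y ^ (-(2 * lam + 2))) volume R S :=
    ((continuousOn_const.mul_wt_rpow hs _).congr fun y _ => (one_mul _).symm).intervalIntegrable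
  rw [← intervalIntegral.integral_eq_sub_of_hasDerivAt (fun y _ => hg y)
    (hg'.intervalIntegrable R S), ← intervalIntegral.integral_const_mul,
    ← intervalIntegral.integral_const_mul, ← intervalIntegral.integral_add (hv2.const_mul _)
      (hw.const_mul _)]
  refine (mul_le_mul_of_nonneg_left (intervalIntegral.abs_integral_le_integral_abs hRS)
    zero_le_two).trans ?_
  rw [← intervalIntegral.integral_const_mul]
  refine intervalIntegral.integral_mono_on hRS ((hg'.intervalIntegrable R S).abs.const_mul 2)
    ((hv2.const_mul _).add (hw.const_mul _)) fun y hy => ?_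
  have hwy := wt_pos (hR.trans hy.1)
  refine two_mul_abs_le_of_sq_le_mul hε (sq_nonneg _) (Real.rpow_nonneg hwy.le _) (le_of_eq ?_)
  rw [mul_pow, ← Real.rpow_natCast (wt y ^ (lam + 1)), ← Real.rpow_mul hwy.le, mul_assoc,
    ← Real.rpow_add hwy]
  push_cast
  ring_nf
  simp

lemma sq_mul_wt_rpow_le_setIntegral (hg : ∀ y, HasDerivAt g (g' y) y) (hg' : Continuous g')
    (hlim : Tendsto g atTop (𝓝 0)) {lam : ℝ} (hlam : 0 < 2 * lam + 1)
    (hv : IntegrableOn (fun y => (g' y * wt y ^ (lam + 1)) ^ 2) (Ioi 0)) {R : ℝ} (hR : 0 ≤ R) :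
    g R ^ 2 * wt R ^ (2 * lam + 1)
      ≤ (2 * lam + 1)⁻¹ * ∫ y in Ioi R, (g' y * wt y ^ (lam + 1)) ^ 2 := by
  set T := ∫ y in Ioi R, (g' y * wt y ^ (lam + 1)) ^ 2
  set W := (2 * lam + 1)⁻¹ * wt R ^ (-(2 * lam + 1))
  have hwR := wt_pos hR
  have hT : 0 ≤ T := setIntegral_nonneg measurableSet_Ioi fun y _ => sq_nonneg _
  have hW : 0 ≤ W := by positivity
  have hbound : ∀ ε > 0, 2 * |g R| ≤ ε * T + ε⁻¹ * W := by
    intro ε hε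
    have hlim' : Tendsto (fun S => 2 * |g S - g R|) atTop (𝓝 (2 * |0 - g R|)) :=
      ((hlim.sub_const (g R)).abs).const_mul 2
    rw [zero_sub, abs_neg] at hlim'
    refine le_of_tendsto hlim' ?_
    filter_upwards [eventually_ge_atTop R] with S hS
    refine (two_mul_abs_sub_le_of_hasDerivAt hg hg' lam hR hS hε).trans ?_
    gcongr
    · exact intervalIntegral_le_setIntegral_Ioi hv (fun y => sq_nonneg _) hR hS
    · exact (show -(2 * lam + 2) = -((2 * lam + 1) + 1) by ring) ▸
        integral_wt_rpow_neg_le hlam hR hS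
  have hsq := sq_le_four_mul_of_forall_le_mul_add_inv_mul (by positivity) hT hW hbound
  have hcancel : wt R ^ (-(2 * lam + 1)) * wt R ^ (2 * lam + 1) = 1 := by
    rw [← Real.rpow_add hwR, neg_add_cancel, Real.rpow_zero]
  calc g R ^ 2 * wt R ^ (2 * lam + 1) ≤ T * W * wt R ^ (2 * lam + 1) := by
        gcongr
        nlinarith [sq_abs (g R)]
    _ = (2 * lam + 1)⁻¹ * T := by
        rw [mul_assoc, mul_assoc, hcancel, mul_one, mul_comm]

theorem eLpNorm_mul_wt_rpow_le_of_tendsto (hg : ∀ y, HasDerivAt g (g' y) y)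
    (hg' : Continuous g') (hlim : Tendsto g atTop (𝓝 0)) {lam : ℝ} (hlam : -1/2 < lam) :
    eLpNorm (fun y => g y * wt y ^ lam) 2 (volume.restrict (Ioi 0))
      ≤ ENNReal.ofReal (2 / (2 * lam + 1))
        * eLpNorm (fun y => g' y * wt y ^ (lam + 1)) 2 (volume.restrict (Ioi 0)) := by
  have hμ : 0 < 2 * lam + 1 := by linarith
  have hgc : Continuous g := continuous_iff_continuousAt.2 fun y => (hg y).continuousAt
  have hvc := hg'.continuousOn.mul_wt_rpow subset_rfl (lam + 1)
  rcases eq_or_ne (eLpNorm (fun y => g' y * wt y ^ (lam + 1)) 2 (volume.restrict (Ioi 0))) ⊤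
    with hB | hB
  · simp [hB, ENNReal.mul_top, hμ]
  have hv : IntegrableOn (fun y => (g' y * wt y ^ (lam + 1)) ^ 2) (Ioi 0) :=
    MemLp.integrable_sq ⟨(hvc.mono Ioi_subset_Ici_self).aestronglyMeasurable measurableSet_Ioi,
      lt_top_iff_ne_top.2 hB⟩
  have htail : Tendsto (fun R => ∫ y in Ioi R, (g' y * wt y ^ (lam + 1)) ^ 2) atTop (𝓝 0) := by
    have := tendsto_setIntegral_of_antitone (fun _ => measurableSet_Ioi)
      (fun _ _ hab => Ioi_subset_Ioi hab) ⟨0, hv⟩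
    have hempty : (⋂ R : ℝ, Ioi R) = ∅ := iInter_eq_empty_iff.2 fun x => ⟨x, lt_irrefl x⟩
    rwa [hempty, Measure.restrict_empty, integral_zero_measure] at this
  rw [← ENNReal.pow_le_pow_left_iff two_ne_zero, mul_pow, sq_eLpNorm_two,
    sq_eLpNorm_two_eq_ofReal_integral hv, ← ENNReal.ofReal_pow (by positivity),
    ← ENNReal.ofReal_mul (by positivity)]
  refine lintegral_Ioi_le_of_intervalIntegral_le
    ((hgc.continuousOn.mul_wt_rpow subset_rfl lam).pow 2) (fun _ => sq_nonneg _)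
    (e := fun R => 2 / (2 * lam + 1) * ((2 * lam + 1)⁻¹ *
      ∫ y in Ioi R, (g' y * wt y ^ (lam + 1)) ^ 2))
    (by simpa using (htail.const_mul _).const_mul _) fun R hR => ?_
  have hkey := le_abs_self _ |>.trans <|
    abs_energy_sub_boundary_le hg hg' lam hR (ε := (2 * lam + 1) / 2) (by positivity)
  have hdecay := sq_mul_wt_rpow_le_setIntegral hg hg' hlim hμ hv hR
  have hBR := intervalIntegral_le_setIntegral_Ioi hv (fun _ => sq_nonneg _) le_rfl hR
  set A := ∫ y in 0..R, (g y * wt y ^ lam) ^ 2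
  rw [inv_div] at hkey
  have hhalf : (2 * lam + 1) / 2 * A
      ≤ (2 * lam + 1)⁻¹ * (∫ y in Ioi R, (g' y * wt y ^ (lam + 1)) ^ 2)
        + 2 / (2 * lam + 1) * ∫ y in Ioi 0, (g' y * wt y ^ (lam + 1)) ^ 2 := by
    linarith [sq_nonneg (g 0),
      mul_le_mul_of_nonneg_left hBR (by positivity : 0 ≤ 2 / (2 * lam + 1))]
  calc A = 2 / (2 * lam + 1) * ((2 * lam + 1) / 2 * A) := by field_simp
    _ ≤ _ := mul_le_mul_of_nonneg_left hhalf (by positivity)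
    _ = _ := by ring

theorem ofReal_sub_mul_sq_eLpNorm_mul_wt_rpow_le (hg : ∀ y, HasDerivAt g (g' y) y)
    (hg' : Continuous g') {lam ε : ℝ} (hε : 0 < ε) (hεlam : ε < -(2 * lam + 1)) :
    ENNReal.ofReal (-(2 * lam + 1) - ε)
        * eLpNorm (fun y => g y * wt y ^ lam) 2 (volume.restrict (Ioi 0)) ^ 2
      ≤ ENNReal.ofReal (g 0 ^ 2) + ENNReal.ofReal ε⁻¹
        * eLpNorm (fun y => g' y * wt y ^ (lam + 1)) 2 (volume.restrict (Ioi 0)) ^ 2 := by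
  have hκ : 0 < -(2 * lam + 1) - ε := by linarith
  have hgc : Continuous g := continuous_iff_continuousAt.2 fun y => (hg y).continuousAt
  have hvc := hg'.continuousOn.mul_wt_rpow subset_rfl (lam + 1)
  rcases eq_or_ne (eLpNorm (fun y => g' y * wt y ^ (lam + 1)) 2 (volume.restrict (Ioi 0))) ⊤
    with hB | hB
  · simp [hB, ENNReal.mul_top, hε]
  have hv : IntegrableOn (fun y => (g' y * wt y ^ (lam + 1)) ^ 2) (Ioi 0) :=
    MemLp.integrable_sq ⟨(hvc.mono Ioi_subset_Ici_self).aestronglyMeasurable measurableSet_Ioi,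
      lt_top_iff_ne_top.2 hB⟩
  set B := ∫ y in Ioi 0, (g' y * wt y ^ (lam + 1)) ^ 2
  have hA : eLpNorm (fun y => g y * wt y ^ lam) 2 (volume.restrict (Ioi 0)) ^ 2
      ≤ ENNReal.ofReal ((-(2 * lam + 1) - ε)⁻¹ * (g 0 ^ 2 + ε⁻¹ * B)) := by
    rw [sq_eLpNorm_two]
    refine lintegral_Ioi_le_of_intervalIntegral_le
      ((hgc.continuousOn.mul_wt_rpow subset_rfl lam).pow 2) (fun _ => sq_nonneg _)
      (e := fun _ => 0) tendsto_const_nhds fun R hR => ?_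
    have hkey := (neg_le_abs _).trans (abs_energy_sub_boundary_le hg hg' lam hR hε)
    have hBR := intervalIntegral_le_setIntegral_Ioi hv (fun _ => sq_nonneg _) le_rfl hR
    have hboundary : 0 ≤ g R ^ 2 * wt R ^ (2 * lam + 1) :=
      mul_nonneg (sq_nonneg _) (Real.rpow_nonneg (wt_pos hR).le _)
    rw [add_zero, le_inv_mul_iff₀ hκ]
    nlinarith [mul_le_mul_of_nonneg_left hBR (inv_nonneg.2 hε.le)]
  calc _ ≤ ENNReal.ofReal (-(2 * lam + 1) - ε)
        * ENNReal.ofReal ((-(2 * lam + 1) - ε)⁻¹ * (g 0 ^ 2 + ε⁻¹ * B)) := by gcongr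
    _ = _ := by
      rw [← ENNReal.ofReal_mul hκ.le, mul_inv_cancel_left₀ hκ.ne',
        ENNReal.ofReal_add (sq_nonneg _) (by positivity), ENNReal.ofReal_mul (by positivity),
        sq_eLpNorm_two_eq_ofReal_integral hv]

end OneDimensional

section Strip

variable {f : ℝ → ℝ → ℝ}

lemma hasDerivAt_fderiv_apply_zero_one
    (hf : Differentiable ℝ (fun p : ℝ × ℝ => f p.1 p.2)) (x y : ℝ) :
    HasDerivAt (fun y' => f x y') (fderiv ℝ (fun p : ℝ × ℝ => f p.1 p.2) (x, y) (0, 1)) y :=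
  (hf (x, y)).hasFDerivAt.comp_hasDerivAt (f := fun y' : ℝ => (x, y')) y
    ((hasDerivAt_const y x).prodMk (hasDerivAt_id y))

lemma hasDerivAt_pdy (hf : Differentiable ℝ (fun p : ℝ × ℝ => f p.1 p.2)) (x y : ℝ) :
    HasDerivAt (fun y' => f x y') (pdy f x y) y := by
  have h := hasDerivAt_fderiv_apply_zero_one hf x y
  rwa [pdy, h.deriv]

lemma continuous_pdy (hf : ContDiff ℝ 1 (fun p : ℝ × ℝ => f p.1 p.2)) :
    Continuous (fun p : ℝ × ℝ => pdy f p.1 p.2) := by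
  have h : (fun p : ℝ × ℝ => pdy f p.1 p.2)
      = fun p => fderiv ℝ (fun q : ℝ × ℝ => f q.1 q.2) p (0, 1) :=
    funext fun p =>
      (hasDerivAt_fderiv_apply_zero_one (hf.differentiable one_ne_zero) p.1 p.2).deriv
  rw [h]
  exact (hf.continuous_fderiv one_ne_zero).clm_apply continuous_const

lemma measurable_mul_wt_rpow {F : ℝ → ℝ → ℝ} (hF : Continuous (fun p : ℝ × ℝ => F p.1 p.2))
    (p : ℝ) : Measurable fun q : ℝ × ℝ => F q.1 q.2 * wt q.2 ^ p :=
  hF.measurable.mul ((measurable_const.add measurable_snd).pow_const p)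

theorem eLpNorm_strip_le_of_tendsto (hf : ContDiff ℝ 1 (fun p : ℝ × ℝ => f p.1 p.2))
    {lam : ℝ} (hlam : -1/2 < lam) (hlim : ∀ x, Tendsto (fun y => f x y) atTop (𝓝 0)) :
    eLpNorm (fun p : ℝ × ℝ => f p.1 p.2 * wt p.2 ^ lam) 2 strip
      ≤ ENNReal.ofReal (2 / (2 * lam + 1))
        * eLpNorm (fun p : ℝ × ℝ => pdy f p.1 p.2 * wt p.2 ^ (lam + 1)) 2 strip := by
  rw [← ENNReal.pow_le_pow_left_iff two_ne_zero, mul_pow, strip,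
    sq_eLpNorm_two_prod _ _ (measurable_mul_wt_rpow hf.continuous lam),
    sq_eLpNorm_two_prod _ _ (measurable_mul_wt_rpow (continuous_pdy hf) (lam + 1)),
    ← lintegral_const_mul' _ _ (by finiteness)]
  refine lintegral_mono fun x => ?_
  rw [← mul_pow]
  exact pow_le_pow_left' (eLpNorm_mul_wt_rpow_le_of_tendsto
    (hasDerivAt_pdy (hf.differentiable one_ne_zero) x)
    ((continuous_pdy hf).comp (Continuous.prodMk_right x)) (hlim x) hlam) 2

theorem eLpNorm_strip_le_of_lt (hf : ContDiff ℝ 1 (fun p : ℝ × ℝ => f p.1 p.2))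
    {lam : ℝ} (hlam : lam < -1/2) :
    eLpNorm (fun p : ℝ × ℝ => f p.1 p.2 * wt p.2 ^ lam) 2 strip
      ≤ ENNReal.ofReal √(1 / -(2 * lam + 1))
          * eLpNorm (fun x => f x 0) 2 (volume.restrict (Ioo 0 1))
        + ENNReal.ofReal (2 / -(2 * lam + 1))
          * eLpNorm (fun p : ℝ × ℝ => pdy f p.1 p.2 * wt p.2 ^ (lam + 1)) 2 strip := by
  have hboundary : Measurable fun x => ENNReal.ofReal (f x 0 ^ 2) :=
    ((hf.continuous.comp (Continuous.prodMk_left 0)).measurable.pow_const 2).ennreal_ofReal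
  refine ENNReal.le_sqrt_inv_mul_add_of_forall_sub_mul_sq_le (by linarith) fun ε hε hεlam => ?_
  rw [strip, sq_eLpNorm_two_prod _ _ (measurable_mul_wt_rpow hf.continuous lam),
    sq_eLpNorm_two_prod _ _ (measurable_mul_wt_rpow (continuous_pdy hf) (lam + 1)),
    sq_eLpNorm_two, ← lintegral_const_mul' _ _ (by finiteness),
    ← lintegral_const_mul' _ _ (by finiteness), ← lintegral_add_left hboundary]
  exact lintegral_mono fun x => ofReal_sub_mul_sq_eLpNorm_mul_wt_rpow_le
    (hasDerivAt_pdy (hf.differentiable one_ne_zero) x)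
    ((continuous_pdy hf).comp (Continuous.prodMk_right x)) hε hεlam

end Strip

theorem hardy_type_inequalities_general (lam : ℝ) (f : ℝ → ℝ → ℝ)
    (hf : ContDiff ℝ 1 (fun p : ℝ × ℝ => f p.1 p.2)) :
    ((-1/2 < lam) → (∀ x : ℝ, Tendsto (fun y => f x y) atTop (𝓝 0)) →
      eLpNorm (fun p : ℝ × ℝ => f p.1 p.2 * wt p.2 ^ lam) 2 strip
        ≤ ENNReal.ofReal (2/(2*lam+1)) *
            eLpNorm (fun p : ℝ × ℝ => pdy f p.1 p.2 * wt p.2 ^ (lam+1)) 2 strip) ∧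
    ((lam < -1/2) →
      eLpNorm (fun p : ℝ × ℝ => f p.1 p.2 * wt p.2 ^ lam) 2 strip
        ≤ ENNReal.ofReal (Real.sqrt (-1/(2*lam+1))) *
              eLpNorm (fun x => f x 0) 2 (volume.restrict (Ioo (0:ℝ) 1))
          + ENNReal.ofReal (-(2/(2*lam+1))) *
              eLpNorm (fun p : ℝ × ℝ => pdy f p.1 p.2 * wt p.2 ^ (lam+1)) 2 strip) := by
  refine ⟨fun hlam hlim => eLpNorm_strip_le_of_tendsto hf hlam hlim, fun hlam => ?_⟩
  rw [neg_div, ← div_neg, ← div_neg]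
  exact eLpNorm_strip_le_of_lt hf hlam

/-- Lemma A.1: Hardy type inequalities on the half-plane strip `𝕋 × ℝ⁺`. -/
theorem hardy_type_inequalities (lam : ℝ) (f : ℝ → ℝ → ℝ)
    (hf : ContDiff ℝ 1 (fun p : ℝ × ℝ => f p.1 p.2))
    (hper : ∀ x y : ℝ, f (x+1) y = f x y) :
    ((-1/2 < lam) → (∀ x : ℝ, Tendsto (fun y => f x y) atTop (𝓝 0)) →
      eLpNorm (fun p : ℝ × ℝ => f p.1 p.2 * wt p.2 ^ lam) 2 strip
        ≤ ENNReal.ofReal (2/(2*lam+1)) *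
            eLpNorm (fun p : ℝ × ℝ => pdy f p.1 p.2 * wt p.2 ^ (lam+1)) 2 strip) ∧
    ((lam < -1/2) →
      eLpNorm (fun p : ℝ × ℝ => f p.1 p.2 * wt p.2 ^ lam) 2 strip
        ≤ ENNReal.ofReal (Real.sqrt (-1/(2*lam+1))) *
              eLpNorm (fun x => f x 0) 2 (volume.restrict (Ioo (0:ℝ) 1))
          + ENNReal.ofReal (-(2/(2*lam+1))) *
              eLpNorm (fun p : ℝ × ℝ => pdy f p.1 p.2 * wt p.2 ^ (lam+1)) 2 strip) :=
  hardy_type_inequalities_general lam f hf
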